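/- arXiv:1402.1332 — 4 statements merged into one kernel-verified Lean document; each statement's English description precedes it below -/
import Mathlib

section
/- Let Q(x,y,z) = x²+y²+10z² and Q'(x,y,z) = 2x²+2y²+3z²−2xz. Then Q and Q' are equivalent over ℝ (there exists M ∈ GL₃(ℝ) with Q(M·v) = Q'(v) for all v ∈ ℝ³) and over ℤ_p for every prime p (for each prime p there exists M_p ∈ GL₃(ℤ_p) with Q(M_p·v) = Q'(v) for all v ∈ ℤ_p³), but Q and Q' are not equivalent over ℤ (there is no M ∈ GL₃(ℤ) with Q(M·v) = Q'(v) for all v ∈ ℤ³). -/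
/-- The ternary quadratic form `x² + y² + 10z²` over a commutative ring. -/
def QA {R : Type*} [CommRing R] (v : Fin 3 → R) : R :=
  v 0 ^ 2 + v 1 ^ 2 + 10 * v 2 ^ 2

/-- The ternary quadratic form `2x² + 2y² + 3z² - 2xz` over a commutative ring. -/
def QB {R : Type*} [CommRing R] (v : Fin 3 → R) : R :=
  2 * v 0 ^ 2 + 2 * v 1 ^ 2 + 3 * v 2 ^ 2 - 2 * v 0 * v 2

/-!
Over a ring in which `2` or `3` is invertible, an explicit change of variables with
denominator `2`, resp. `3`, carries `x² + y² + 10z²` to `2x² + 2y² + 3z² - 2xz`. In a local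
ring one of `2`, `3` is a unit since `3 - 2 = 1`; this covers `ℝ` and every `ℤ_[p]`.
Over `ℤ` the forms differ because `QA` represents `1` while `QB` does not: `2 · QB` equals
`(2x - z)² + 4y² + 5z²`, which takes the value `2` nowhere.
-/

open Matrix

def QAEquivQB (R : Type*) [CommRing R] : Prop :=
  ∃ M : Matrix (Fin 3) (Fin 3) R, IsUnit M.det ∧ ∀ v : Fin 3 → R, QA (M *ᵥ v) = QB v

section CommRing

variable {R : Type*} [CommRing R]

theorem qaEquivQB_of_mul_two_eq_one {c : R} (hc : 2 * c = 1) : QAEquivQB R := by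
  refine ⟨!![1, 1, -c; 1, -1, -c; 0, 0, c], ?_, fun v => ?_⟩
  · have hdet : (!![1, 1, -c; 1, -1, -c; 0, 0, c] : Matrix (Fin 3) (Fin 3) R).det = -1 := by
      simp only [det_fin_three, of_apply, cons_val', cons_val_zero, cons_val_one, cons_val,
        cons_val_fin_one]
      linear_combination -hc
    rw [hdet]
    exact isUnit_one.neg
  · simp only [QA, QB, mulVec, dotProduct, Fin.sum_univ_three, of_apply, cons_val',
      cons_val_zero, cons_val_one, cons_val, cons_val_fin_one]
    linear_combination (3 * v 2 ^ 2 + 6 * v 2 ^ 2 * c - 2 * v 0 * v 2) * hc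

theorem qaEquivQB_of_mul_three_eq_one {c : R} (hc : 3 * c = 1) : QAEquivQB R := by
  refine ⟨!![-1, -2 * c, -c; -1, 2 * c, 4 * c; 0, -c, c], ?_, fun v => ?_⟩
  · have hdet :
        (!![-1, -2 * c, -c; -1, 2 * c, 4 * c; 0, -c, c] : Matrix (Fin 3) (Fin 3) R).det = -1 := by
      simp only [det_fin_three, of_apply, cons_val', cons_val_zero, cons_val_one, cons_val,
        cons_val_fin_one]
      linear_combination (-(3 * c + 1)) * hc
    rw [hdet]
    exact isUnit_one.neg
  · simp only [QA, QB, mulVec, dotProduct, Fin.sum_univ_three, of_apply, cons_val',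
      cons_val_zero, cons_val_one, cons_val, cons_val_fin_one]
    linear_combination
      (3 * v 2 ^ 2 + 9 * v 2 ^ 2 * c + 2 * v 1 ^ 2 + 6 * v 1 ^ 2 * c - 2 * v 0 * v 2) * hc

theorem qaEquivQB_of_isLocalRing [IsLocalRing R] : QAEquivQB R := by
  rcases IsLocalRing.isUnit_or_isUnit_of_add_one (show (3 : R) + -2 = 1 by norm_num)
    with h3 | h2
  · obtain ⟨c, hc⟩ := h3.exists_right_inv
    exact qaEquivQB_of_mul_three_eq_one hc
  · obtain ⟨c, hc⟩ := h2.neg.exists_right_inv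
    exact qaEquivQB_of_mul_two_eq_one (by simpa using hc)

theorem QAEquivQB.exists_QB_eq_QA (h : QAEquivQB R) (w : Fin 3 → R) : ∃ v, QB v = QA w := by
  obtain ⟨M, hdet, hM⟩ := h
  refine ⟨M⁻¹ *ᵥ w, ?_⟩
  rw [← hM, mulVec_mulVec, mul_nonsing_inv M hdet, one_mulVec]

end CommRing

theorem QB_int_ne_one (v : Fin 3 → ℤ) : QB v ≠ 1 := by
  intro hQB
  have hsum : (2 * v 0 - v 2) ^ 2 + 4 * v 1 ^ 2 + 5 * v 2 ^ 2 = 2 := by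
    unfold QB at hQB
    linear_combination 2 * hQB
  have hz : v 2 = 0 := by
    by_contra hz
    nlinarith [sq_nonneg (2 * v 0 - v 2), sq_nonneg (v 1), sq_pos_of_ne_zero hz]
  have h4 : (4 : ℤ) ∣ 2 := ⟨v 0 ^ 2 + v 1 ^ 2, by rw [hz] at hsum; linear_combination -hsum⟩
  norm_num at h4

theorem not_qaEquivQB_int : ¬QAEquivQB ℤ := fun h => by
  obtain ⟨v, hv⟩ := h.exists_QB_eq_QA ![1, 0, 0]
  exact QB_int_ne_one v (by simpa [QA] using hv)

/-- The forms `x²+y²+10z²` and `2x²+2y²+3z²-2xz` are equivalent over `ℝ` and over `ℤ_p`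
for every prime `p`, but not over `ℤ`. -/
theorem stmt_10 :
    (∃ M : Matrix (Fin 3) (Fin 3) ℝ, IsUnit M.det ∧
      ∀ v : Fin 3 → ℝ, QA (M.mulVec v) = QB v) ∧
    (∀ (p : ℕ) [Fact p.Prime], ∃ M : Matrix (Fin 3) (Fin 3) ℤ_[p], IsUnit M.det ∧
      ∀ v : Fin 3 → ℤ_[p], QA (M.mulVec v) = QB v) ∧
    ¬(∃ M : Matrix (Fin 3) (Fin 3) ℤ, IsUnit M.det ∧
      ∀ v : Fin 3 → ℤ, QA (M.mulVec v) = QB v) :=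
  ⟨qaEquivQB_of_isLocalRing, fun _ _ => qaEquivQB_of_isLocalRing, not_qaEquivQB_int⟩
end

section
/- Let f(x,y) = ax²+bxy+cy² be a positive definite primitive integral binary quadratic form (a > 0, gcd(a,b,c) = 1) of discriminant D = b²−4ac < 0. Then the number of matrices A ∈ SL₂(ℤ) with f(A·v) = f(v) for all v ∈ ℤ² equals 6 if D = −3, equals 4 if D = −4, and equals 2 if D < −4. -/
/-!
Write a proper automorph as `A = !![p, q; r, s]`. Comparing coefficients in `f (A v) = f v` and
using `det A = 1` gives the linear relations `a q + c r = 0` and `b r = a (s - p)`, so primitivity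
of `f` forces `a ∣ r`, and `A = !![p, -c u; a u, p + b u]` with `p² + b p u + a c u² = 1`; this is
the classical automorph attached to the norm-one element `(t + u √D) / 2`, `t = 2 p + b u`.
Hence automorphs correspond to integer solutions of `t² - D u² = 4` (the parity condition
`t ≡ b u mod 2` is automatic since `D ≡ b² mod 4`). For `D < 0` these are `(±2, 0)`, together with
`(±1, ±1)` when `D = -3` and `(0, ±1)` when `D = -4`; `D` is never `-1` or `-2`.
-/

/-- The binary quadratic form `a x² + b x y + c y²` encoded as the triple `(a, b, c)`. -/
def bqf (f : ℤ × ℤ × ℤ) (x y : ℤ) : ℤ := f.1 * x ^ 2 + f.2.1 * x * y + f.2.2 * y ^ 2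

open Matrix

def IsProperAutomorph (f : ℤ × ℤ × ℤ) (A : Matrix (Fin 2) (Fin 2) ℤ) : Prop :=
  A.det = 1 ∧ ∀ x y : ℤ, bqf f (A 0 0 * x + A 0 1 * y) (A 1 0 * x + A 1 1 * y) = bqf f x y

def automorphMatrix (a b c p u : ℤ) : Matrix (Fin 2) (Fin 2) ℤ :=
  !![p, -c * u; a * u, p + b * u]

section Automorphs

variable {a b c : ℤ}

theorem det_automorphMatrix (p u : ℤ) :
    (automorphMatrix a b c p u).det = p ^ 2 + b * p * u + a * c * u ^ 2 := by
  rw [automorphMatrix, det_fin_two_of]; ring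

theorem bqf_automorphMatrix (p u x y : ℤ) :
    let A := automorphMatrix a b c p u
    bqf (a, b, c) (A 0 0 * x + A 0 1 * y) (A 1 0 * x + A 1 1 * y) =
      (p ^ 2 + b * p * u + a * c * u ^ 2) * bqf (a, b, c) x y := by
  simp only [automorphMatrix, of_apply, cons_val', cons_val_zero, cons_val_one, empty_val',
    cons_val_fin_one, bqf]
  ring

theorem isProperAutomorph_automorphMatrix {p u : ℤ} (h : p ^ 2 + b * p * u + a * c * u ^ 2 = 1) :
    IsProperAutomorph (a, b, c) (automorphMatrix a b c p u) :=
  ⟨by rw [det_automorphMatrix, h], fun x y => by rw [bqf_automorphMatrix, h, one_mul]⟩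

theorem automorphMatrix_injective (ha : a ≠ 0) :
    Function.Injective fun x : ℤ × ℤ => automorphMatrix a b c x.1 x.2 := by
  rintro ⟨p, u⟩ ⟨p', u'⟩ h
  have h00 := congrFun (congrFun h 0) 0
  have h10 := congrFun (congrFun h 1) 0
  simp only [automorphMatrix, of_apply, cons_val', cons_val_zero, cons_val_one, empty_val',
    cons_val_fin_one] at h00 h10
  rw [h00, mul_left_cancel₀ ha h10]

theorem IsProperAutomorph.linear_relations {A : Matrix (Fin 2) (Fin 2) ℤ}
    (hA : IsProperAutomorph (a, b, c) A) :
    a * A 0 1 + c * A 1 0 = 0 ∧ b * A 1 0 = a * (A 1 1 - A 0 0) := by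
  obtain ⟨hdet, hf⟩ := hA
  rw [det_fin_two] at hdet
  simp only [bqf] at hf
  set p := A 0 0; set q := A 0 1; set r := A 1 0; set s := A 1 1
  have e10 := hf 1 0
  have e01 := hf 0 1
  have e11 := hf 1 1
  have hpq : 2 * (a * p * q + b * q * r + c * r * s) = 0 := by
    linear_combination e11 - e10 - e01 - b * hdet
  replace hpq := (mul_eq_zero.mp hpq).resolve_left two_ne_zero
  constructor
  · linear_combination -q * e10 + p * hpq - c * r * hdet
  · linear_combination s * e10 - r * hpq - (a * p + b * r) * hdet

theorem Int.dvd_of_dvd_mul_of_dvd_mul {a b c r : ℤ} (hprim : Int.gcd a (Int.gcd b c) = 1)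
    (hb : a ∣ b * r) (hc : a ∣ c * r) : a ∣ r := by
  have hcop : IsCoprime a (Int.gcd b c : ℤ) := Int.isCoprime_iff_gcd_eq_one.mpr hprim
  refine hcop.dvd_of_dvd_mul_left ?_
  rw [Int.gcd_eq_gcd_ab, add_mul, mul_right_comm, mul_right_comm c]
  exact dvd_add (hb.mul_right _) (hc.mul_right _)

theorem IsProperAutomorph.exists_eq_automorphMatrix (ha : a ≠ 0)
    (hprim : Int.gcd a (Int.gcd b c) = 1) {A : Matrix (Fin 2) (Fin 2) ℤ}
    (hA : IsProperAutomorph (a, b, c) A) : ∃ p u, A = automorphMatrix a b c p u := by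
  obtain ⟨hq, hs⟩ := hA.linear_relations
  obtain ⟨u, hu⟩ : a ∣ A 1 0 :=
    Int.dvd_of_dvd_mul_of_dvd_mul hprim ⟨_, hs⟩ ⟨-A 0 1, by linear_combination hq⟩
  refine ⟨A 0 0, u, ?_⟩
  have hq' : A 0 1 = -c * u := mul_left_cancel₀ ha (by linear_combination hq - c * hu)
  have hs' : A 1 1 = A 0 0 + b * u := mul_left_cancel₀ ha (by linear_combination -hs + b * hu)
  ext i j
  fin_cases i <;> fin_cases j <;> simp [automorphMatrix, hq', hu, hs']

theorem card_properAutomorph (ha : a ≠ 0) (hprim : Int.gcd a (Int.gcd b c) = 1) :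
    Nat.card {A // IsProperAutomorph (a, b, c) A} =
      Nat.card {x : ℤ × ℤ // x.1 ^ 2 + b * x.1 * x.2 + a * c * x.2 ^ 2 = 1} := by
  refine (Nat.card_eq_of_bijective
    (fun x => ⟨automorphMatrix a b c x.1.1 x.1.2, isProperAutomorph_automorphMatrix x.2⟩)
    ⟨fun x y h => Subtype.ext (automorphMatrix_injective ha (congrArg Subtype.val h)), ?_⟩).symm
  rintro ⟨A, hA⟩
  obtain ⟨p, u, rfl⟩ := hA.exists_eq_automorphMatrix ha hprim
  have hnorm : p ^ 2 + b * p * u + a * c * u ^ 2 = 1 := by rw [← det_automorphMatrix]; exact hA.1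
  exact ⟨⟨(p, u), hnorm⟩, rfl⟩

end Automorphs

def normFourSolutions (D : ℤ) : Set (ℤ × ℤ) := {x | x.1 ^ 2 - D * x.2 ^ 2 = 4}

theorem card_normOne_eq_ncard_normFourSolutions (a b c : ℤ) :
    Nat.card {x : ℤ × ℤ // x.1 ^ 2 + b * x.1 * x.2 + a * c * x.2 ^ 2 = 1} =
      (normFourSolutions (b ^ 2 - 4 * a * c)).ncard := by
  rw [← Nat.card_coe_set_eq]
  refine Nat.card_eq_of_bijective
    (fun x => ⟨(2 * x.1.1 + b * x.1.2, x.1.2), by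
      simp only [normFourSolutions, Set.mem_ofPred_eq]; linear_combination 4 * x.2⟩) ⟨?_, ?_⟩
  · rintro ⟨⟨p, u⟩, _⟩ ⟨⟨p', u'⟩, _⟩ h
    obtain ⟨ht, rfl⟩ := Prod.ext_iff.mp (congrArg Subtype.val h)
    exact Subtype.ext (Prod.ext (by simpa using ht) rfl)
  · rintro ⟨⟨t, u⟩, h⟩
    simp only [normFourSolutions, Set.mem_ofPred_eq] at h
    have hprod : Even ((t - b * u) * (t - b * u + 2 * (b * u))) :=
      ⟨2 * (1 - a * c * u ^ 2), by linear_combination h⟩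
    obtain ⟨p, hp⟩ : Even (t - b * u) := by
      rcases Int.even_mul.mp hprod with h | h
      · exact h
      · exact (Int.even_add.mp h).mpr (even_two_mul _)
    refine ⟨⟨(p, u), ?_⟩, Subtype.ext (Prod.ext (show 2 * p + b * u = t by linarith) rfl)⟩
    have h4 : 4 * (p ^ 2 + b * p * u + a * c * u ^ 2) = 4 * 1 := by
      linear_combination h - (t + 2 * p + b * u) * hp
    exact mul_left_cancel₀ four_ne_zero h4

theorem normFourSolutions_eq_filter {D : ℤ} (hD : D < 0) :
    normFourSolutions D =
      ↑((Finset.Icc (-2) 2 ×ˢ Finset.Icc (-2) 2).filter fun x : ℤ × ℤ =>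
        x.1 ^ 2 - D * x.2 ^ 2 = 4) := by
  ext ⟨t, u⟩
  simp only [normFourSolutions, Set.mem_ofPred_eq, Finset.coe_filter, Finset.mem_product,
    Finset.mem_Icc]
  refine ⟨fun h => ⟨⟨⟨?_, ?_⟩, ?_, ?_⟩, h⟩, And.right⟩ <;> nlinarith [sq_nonneg t, sq_nonneg u]

theorem ncard_normFourSolutions_neg_three : (normFourSolutions (-3)).ncard = 6 := by
  rw [normFourSolutions_eq_filter (by norm_num), Set.ncard_coe_finset]
  decide

theorem ncard_normFourSolutions_neg_four : (normFourSolutions (-4)).ncard = 4 := by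
  rw [normFourSolutions_eq_filter (by norm_num), Set.ncard_coe_finset]
  decide

theorem ncard_normFourSolutions_of_le {D : ℤ} (hD : D ≤ -5) :
    (normFourSolutions D).ncard = 2 := by
  have hsol : normFourSolutions D = {(2, 0), (-2, 0)} := by
    ext ⟨t, u⟩
    simp only [normFourSolutions, Set.mem_ofPred_eq, Set.mem_insert_iff, Set.mem_singleton_iff,
      Prod.mk.injEq]
    constructor
    · intro h
      have hu : u = 0 := pow_eq_zero_iff (n := 2) two_ne_zero |>.mp <|
        le_antisymm (by nlinarith [sq_nonneg t, sq_nonneg u]) (sq_nonneg u)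
      subst hu
      have ht : (t - 2) * (t + 2) = 0 := by linear_combination h
      rcases mul_eq_zero.mp ht with ht | ht <;> omega
    · rintro (⟨rfl, rfl⟩ | ⟨rfl, rfl⟩) <;> norm_num
  rw [hsol, Set.ncard_pair (by decide)]

theorem discr_emod_four (a b c : ℤ) :
    (b ^ 2 - 4 * a * c) % 4 = 0 ∨ (b ^ 2 - 4 * a * c) % 4 = 1 := by
  rw [Int.sub_emod, mul_assoc, Int.mul_emod_right, sub_zero, Int.emod_emod_of_dvd _ (dvd_refl 4)]
  rcases Int.even_or_odd b with ⟨k, rfl⟩ | hb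
  · left
    rw [show (k + k) ^ 2 = 4 * k ^ 2 by ring, Int.mul_emod_right]
  · exact Or.inr (Int.sq_mod_four_eq_one_of_odd hb)

/-- A positive definite primitive integral binary quadratic form of discriminant `D < 0`
has exactly `6` proper automorphs in `SL₂(ℤ)` when `D = -3`, exactly `4` when `D = -4`,
and exactly `2` when `D < -4`. -/
theorem stmt_12 (a b c D : ℤ) (ha : 0 < a) (hprim : Int.gcd a (Int.gcd b c) = 1)
    (hD : b ^ 2 - 4 * a * c = D) (hneg : D < 0) :
    Nat.card {A : Matrix (Fin 2) (Fin 2) ℤ // A.det = 1 ∧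
        ∀ x y : ℤ, bqf (a, b, c) (A 0 0 * x + A 0 1 * y) (A 1 0 * x + A 1 1 * y) =
          bqf (a, b, c) x y} =
      if D = -3 then 6 else if D = -4 then 4 else 2 := by
  change Nat.card {A // IsProperAutomorph (a, b, c) A} = _
  rw [card_properAutomorph ha.ne' hprim, card_normOne_eq_ncard_normFourSolutions, hD]
  split_ifs with h3 h4
  · rw [h3, ncard_normFourSolutions_neg_three]
  · rw [h4, ncard_normFourSolutions_neg_four]
  · have := discr_emod_four a b c
    exact ncard_normFourSolutions_of_le (by omega)
end

section
/- Let p be an odd prime and n a positive integer. Then n is primitively represented as a sum of three squares over ℤ_p: there exist x, y, z ∈ ℤ_p with x²+y²+z² = n such that not all of x, y, z lie in pℤ_p. -/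
/-!
Modulo `p` every residue is a sum of two squares, so choose `y, z` with `y² + z² ≡ n - 1`.
Then `n - y² - z² ≡ 1` is a nonzero square modulo `p`, and since `p` is odd Hensel's lemma
lifts it to the square of a `p`-adic unit `x`.
-/

namespace PadicInt

variable {p : ℕ} [Fact p.Prime]

theorem natCast_dvd_iff_toZMod_eq_zero (x : ℤ_[p]) : (p : ℤ_[p]) ∣ x ↔ toZMod x = 0 := by
  rw [← RingHom.mem_ker, ker_toZMod, maximalIdeal_eq_span_p, Ideal.mem_span_singleton]

theorem norm_lt_one_iff_toZMod_eq_zero (x : ℤ_[p]) : ‖x‖ < 1 ↔ toZMod x = 0 := by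
  rw [norm_lt_one_iff_dvd, natCast_dvd_iff_toZMod_eq_zero]

theorem norm_eq_one_iff_toZMod_ne_zero (x : ℤ_[p]) : ‖x‖ = 1 ↔ toZMod x ≠ 0 := by
  rw [ne_eq, ← norm_lt_one_iff_toZMod_eq_zero, (norm_le_one x).lt_iff_ne, not_not]

theorem norm_two_eq_one (hp : p ≠ 2) : ‖(2 : ℤ_[p])‖ = 1 := by
  have h := norm_natCast_eq_one_iff (p := p) (n := 2)
  rw [Nat.cast_ofNat] at h
  exact h.mpr <| (Nat.coprime_primes Fact.out Nat.prime_two).mpr hp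

theorem exists_sq_eq_of_toZMod_eq_sq (hp : p ≠ 2) {m a : ℤ_[p]} (ha : toZMod a ≠ 0)
    (hm : toZMod m = toZMod a ^ 2) : ∃ z : ℤ_[p], z ^ 2 = m ∧ toZMod z = toZMod a := by
  set F : Polynomial ℤ_[p] := Polynomial.X ^ 2 - Polynomial.C m
  have hF : ∀ x, F.aeval x = x ^ 2 - m := by simp [F]
  have hF' : ‖F.derivative.aeval a‖ = 1 := by
    simp only [F, Polynomial.derivative_sub, Polynomial.derivative_C, sub_zero,
      Polynomial.derivative_X_pow, map_mul, map_natCast, map_pow, Polynomial.aeval_X]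
    rw [norm_mul, Nat.cast_ofNat, norm_two_eq_one hp, one_mul, pow_one,
      norm_eq_one_iff_toZMod_ne_zero]
    exact ha
  have hnorm : ‖F.aeval a‖ < ‖F.derivative.aeval a‖ ^ 2 := by
    rw [hF', one_pow, hF, norm_lt_one_iff_toZMod_eq_zero, map_sub, map_pow, hm, sub_self]
  obtain ⟨z, hz, hza, -, -⟩ := hensels_lemma hnorm
  rw [hF, sub_eq_zero] at hz
  rw [hF', norm_lt_one_iff_toZMod_eq_zero, map_sub, sub_eq_zero] at hza
  exact ⟨z, hz, hza⟩

theorem exists_sq_add_sq_add_sq_eq_of_toZMod_ne_zero (hp : p ≠ 2) (n : ℤ_[p]) :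
    ∃ x y z : ℤ_[p], x ^ 2 + y ^ 2 + z ^ 2 = n ∧ toZMod x ≠ 0 := by
  obtain ⟨b, c, hbc⟩ := ZMod.sq_add_sq p (toZMod n - 1)
  obtain ⟨y, rfl⟩ := ZMod.ringHom_surjective toZMod b
  obtain ⟨z, rfl⟩ := ZMod.ringHom_surjective toZMod c
  have hm : toZMod (n - y ^ 2 - z ^ 2) = toZMod 1 ^ 2 := by
    simp only [map_sub, map_pow, map_one]
    linear_combination -hbc
  obtain ⟨x, hx, hx1⟩ := exists_sq_eq_of_toZMod_eq_sq hp (by simp) hm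
  refine ⟨x, y, z, by rw [hx]; ring, ?_⟩
  simp [hx1]

end PadicInt

theorem stmt_14_general (p : ℕ) [Fact p.Prime] (hp : p ≠ 2) (n : ℕ) :
    ∃ x y z : ℤ_[p], x ^ 2 + y ^ 2 + z ^ 2 = (n : ℤ_[p]) ∧
      ¬((p : ℤ_[p]) ∣ x ∧ (p : ℤ_[p]) ∣ y ∧ (p : ℤ_[p]) ∣ z) := by
  obtain ⟨x, y, z, hsum, hx⟩ :=
    PadicInt.exists_sq_add_sq_add_sq_eq_of_toZMod_ne_zero hp (n : ℤ_[p])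
  exact ⟨x, y, z, hsum, fun h ↦ hx ((PadicInt.natCast_dvd_iff_toZMod_eq_zero x).mp h.1)⟩

/-- Every positive integer is primitively represented as a sum of three squares over `ℤ_p`
for every odd prime `p`. -/
theorem stmt_14 (p : ℕ) [Fact p.Prime] (hp : p ≠ 2) (n : ℕ) (hn : 0 < n) :
    ∃ x y z : ℤ_[p], x ^ 2 + y ^ 2 + z ^ 2 = (n : ℤ_[p]) ∧
      ¬((p : ℤ_[p]) ∣ x ∧ (p : ℤ_[p]) ∣ y ∧ (p : ℤ_[p]) ∣ z) :=
  stmt_14_general p hp n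
end

section
/- Let n be an integer with gcd(n,5) = 1 and let k ≥ 1. Then the number of triples (x,y,z) ∈ (ℤ/5^kℤ)³ with x²+y²+10z² ≡ n (mod 5^k) equals 4·5^{2k−1}, and every such solution is primitive (for every such triple, x and y are not both divisible by 5). In particular, the counts divided by 5^{2k} equal 4/5 for all k, which is the primitive local density β_5 of representations of n by x²+y²+10z² at the prime 5. -/
/-!
In `R = ℤ/5^kℤ` the element `2` is a unit, `5` is nilpotent, and `-1` has a square root `i`
(Hensel-lift `2² ≡ -1 (mod 5)`). As `n` is a unit and `10z²` is nilpotent, `c = n - 10z²` is a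
unit for every `z`, and the substitution `u = x + iy`, `w = x - iy` turns `x² + y² = c` into
`uw = c`, whose solutions are parametrised by the unit `u`. Hence there are
`5^k · φ(5^k) = 4·5^{2k-1}` solutions. If `5` divided `x` and `y` it would divide `n`.
-/

section SumTwoSquares

variable {R : Type*} [CommRing R] {i : R}

def sumSqEquivMulEq [Invertible (2 : R)] (hi : i ^ 2 = -1) (c : R) :
    {p : R × R // p.1 ^ 2 + p.2 ^ 2 = c} ≃ {q : R × R // q.1 * q.2 = c} where
  toFun p := ⟨(p.1.1 + i * p.1.2, p.1.1 - i * p.1.2), by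
    linear_combination (-p.1.2 ^ 2) * hi + p.2⟩
  invFun q := ⟨((q.1.1 + q.1.2) * ⅟2, i * (q.1.2 - q.1.1) * ⅟2), by
    linear_combination ((q.1.2 - q.1.1) * ⅟2) ^ 2 * hi
      + (2 * ⅟2 + 1) * q.1.1 * q.1.2 * mul_invOf_self (2 : R) + q.2⟩
  left_inv p := by
    ext
    · linear_combination p.1.1 * mul_invOf_self (2 : R)
    · linear_combination (-2 * p.1.2 * ⅟2) * hi + p.1.2 * mul_invOf_self (2 : R)
  right_inv q := by
    ext
    · linear_combination ((q.1.2 - q.1.1) * ⅟2) * hi + q.1.1 * mul_invOf_self (2 : R)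
    · linear_combination (-(q.1.2 - q.1.1) * ⅟2) * hi + q.1.2 * mul_invOf_self (2 : R)

def mulEqEquivUnits {M : Type*} [CommMonoid M] (c : Mˣ) :
    {q : M × M // q.1 * q.2 = c} ≃ Mˣ where
  toFun q := Units.mkOfMulEqOne q.1.1 (q.1.2 * ↑c⁻¹) (by rw [← mul_assoc, q.2, c.mul_inv])
  invFun u := ⟨(u, ↑u⁻¹ * c), by simp⟩
  left_inv q := by
    ext
    · rfl
    · change q.1.2 * ↑c⁻¹ * c = q.1.2
      simp
  right_inv u := by ext; rfl

theorem card_sq_add_sq_eq_of_isUnit [Invertible (2 : R)] (hi : i ^ 2 = -1) {c : R}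
    (hc : IsUnit c) : Nat.card {p : R × R // p.1 ^ 2 + p.2 ^ 2 = c} = Nat.card Rˣ := by
  obtain ⟨u, rfl⟩ := hc
  exact Nat.card_congr ((sumSqEquivMulEq hi _).trans (mulEqEquivUnits u))

def sqAddSqAddMulSqEquivSigma (a c : R) :
    {v : R × R × R // v.1 ^ 2 + v.2.1 ^ 2 + a * v.2.2 ^ 2 = c} ≃
      Σ z : R, {p : R × R // p.1 ^ 2 + p.2 ^ 2 = c - a * z ^ 2} where
  toFun v := ⟨v.1.2.2, (v.1.1, v.1.2.1), eq_sub_iff_add_eq.mpr v.2⟩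
  invFun w := ⟨(w.2.1.1, w.2.1.2, w.1), eq_sub_iff_add_eq.mp w.2.2⟩
  left_inv _ := rfl
  right_inv _ := rfl

theorem card_sq_add_sq_add_mul_sq [Fintype R] [Invertible (2 : R)] (hi : i ^ 2 = -1) {a c : R}
    (ha : IsNilpotent a) (hc : IsUnit c) :
    Nat.card {v : R × R × R // v.1 ^ 2 + v.2.1 ^ 2 + a * v.2.2 ^ 2 = c} =
      Nat.card R * Nat.card Rˣ := by
  have hunit (z : R) : IsUnit (c - a * z ^ 2) := by
    rw [sub_eq_add_neg]
    exact ((Commute.all a _).isNilpotent_mul_right ha).neg.isUnit_add_left_of_commute hc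
      (Commute.all _ _)
  rw [Nat.card_congr (sqAddSqAddMulSqEquivSigma a c), Nat.card_sigma,
    Finset.sum_congr rfl fun z _ => card_sq_add_sq_eq_of_isUnit hi (hunit z),
    Finset.sum_const, Finset.card_univ, smul_eq_mul, ← Nat.card_eq_fintype_card]

theorem not_dvd_and_dvd_of_sq_add_sq_add_mul_sq_eq [Nontrivial R] {p a c x y z : R}
    (hp : IsNilpotent p) (hpa : p ∣ a) (hc : IsUnit c) (h : x ^ 2 + y ^ 2 + a * z ^ 2 = c) :
    ¬(p ∣ x ∧ p ∣ y) := by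
  rintro ⟨hx, hy⟩
  have hpc : p ∣ c := h ▸ dvd_add (dvd_add (dvd_pow hx two_ne_zero) (dvd_pow hy two_ne_zero))
    (dvd_mul_of_dvd_left hpa _)
  exact hp.not_isUnit (isUnit_of_dvd_unit hpc hc)

end SumTwoSquares

theorem exists_five_pow_dvd_sq_add_one (k : ℕ) : ∃ t : ℤ, 5 ^ (k + 1) ∣ t ^ 2 + 1 := by
  induction k with
  | zero => exact ⟨2, by norm_num⟩
  | succ k ih =>
    obtain ⟨t, ht⟩ := ih
    -- Newton step `t ↦ t - (t² + 1)/(2t)`, using `1/(2t) ≡ -2t (mod 5)`.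
    refine ⟨t - 2 * t * (t ^ 2 + 1), ?_⟩
    have hsq : 5 ^ (k + 2) ∣ (t ^ 2 + 1) ^ 2 :=
      (pow_dvd_pow 5 (by omega : k + 2 ≤ (k + 1) * 2)).trans
        (by rw [pow_mul]; exact pow_dvd_pow_of_dvd ht 2)
    rw [show (t - 2 * t * (t ^ 2 + 1)) ^ 2 + 1 =
      (t ^ 2 + 1) ^ 2 * (4 * (t ^ 2 - 1)) + 5 * (t ^ 2 + 1) by ring]
    exact dvd_add (dvd_mul_of_dvd_left hsq _) (by rw [pow_succ']; exact mul_dvd_mul_left 5 ht)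

theorem exists_sq_eq_neg_one_zmod_five_pow (k : ℕ) : ∃ i : ZMod (5 ^ k), i ^ 2 = -1 := by
  obtain ⟨t, ht⟩ := exists_five_pow_dvd_sq_add_one k
  refine ⟨t, eq_neg_of_add_eq_zero_left ?_⟩
  exact_mod_cast (ZMod.intCast_zmod_eq_zero_iff_dvd _ _).mpr
    (by push_cast; exact (pow_dvd_pow 5 k.le_succ).trans ht)

theorem ZMod.isNilpotent_natCast_self_pow (p k : ℕ) : IsNilpotent (p : ZMod (p ^ k)) :=
  ⟨k, by exact_mod_cast ZMod.natCast_self (p ^ k)⟩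

theorem ZMod.isUnit_intCast_of_isCoprime_pow {n : ℤ} {p : ℕ} (k : ℕ) (h : IsCoprime n p) :
    IsUnit (n : ZMod (p ^ k)) := by
  rw [ZMod.coe_int_isUnit_iff_isCoprime, Nat.cast_pow]
  exact h.symm.pow_left

/-- For `gcd(n,5) = 1` and `k ≥ 1`, the congruence `x²+y²+10z² ≡ n (mod 5^k)` has exactly
`4·5^{2k-1}` solutions, each of them primitive (`x`, `y` not both divisible by `5`); in
particular the normalized counts equal `4/5` for all `k`, the primitive local density at
the prime `5`. -/
theorem stmt_16 (n : ℤ) (hn : Int.gcd n 5 = 1) (k : ℕ) (hk : 1 ≤ k) :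
    Nat.card {v : ZMod (5 ^ k) × ZMod (5 ^ k) × ZMod (5 ^ k) //
        v.1 ^ 2 + v.2.1 ^ 2 + 10 * v.2.2 ^ 2 = (n : ZMod (5 ^ k))} =
      4 * 5 ^ (2 * k - 1) ∧
    (∀ x y z : ZMod (5 ^ k), x ^ 2 + y ^ 2 + 10 * z ^ 2 = (n : ZMod (5 ^ k)) →
      ¬((5 : ZMod (5 ^ k)) ∣ x ∧ (5 : ZMod (5 ^ k)) ∣ y)) ∧
    (Nat.card {v : ZMod (5 ^ k) × ZMod (5 ^ k) × ZMod (5 ^ k) //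
        v.1 ^ 2 + v.2.1 ^ 2 + 10 * v.2.2 ^ 2 = (n : ZMod (5 ^ k))} : ℚ) / 5 ^ (2 * k) =
      4 / 5 := by
  have : Fact (1 < 5 ^ k) := ⟨Nat.one_lt_pow (by omega) (by norm_num)⟩
  have h5 : IsNilpotent (5 : ZMod (5 ^ k)) := by
    simpa using ZMod.isNilpotent_natCast_self_pow 5 k
  have h10 : IsNilpotent (10 : ZMod (5 ^ k)) := by
    rw [show (10 : ZMod (5 ^ k)) = 5 * 2 by norm_num]
    exact (Commute.all _ _).isNilpotent_mul_right h5
  have hn : IsUnit (n : ZMod (5 ^ k)) :=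
    ZMod.isUnit_intCast_of_isCoprime_pow k (by exact_mod_cast Int.isCoprime_iff_gcd_eq_one.mpr hn)
  let : Invertible (2 : ZMod (5 ^ k)) := IsUnit.invertible <| by
    exact_mod_cast ZMod.isUnit_intCast_of_isCoprime_pow (n := 2) k (by norm_num)
  obtain ⟨i, hi⟩ := exists_sq_eq_neg_one_zmod_five_pow k
  have hcard : Nat.card {v : ZMod (5 ^ k) × ZMod (5 ^ k) × ZMod (5 ^ k) //
      v.1 ^ 2 + v.2.1 ^ 2 + 10 * v.2.2 ^ 2 = (n : ZMod (5 ^ k))} = 4 * 5 ^ (2 * k - 1) := by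
    rw [card_sq_add_sq_add_mul_sq hi h10 hn, Nat.card_zmod, Nat.card_eq_fintype_card,
      ZMod.card_units_eq_totient, Nat.totient_prime_pow Nat.prime_five hk,
      show 2 * k - 1 = k + (k - 1) by omega, pow_add]
    ring
  refine ⟨hcard, fun x y z h => ?_, ?_⟩
  · exact not_dvd_and_dvd_of_sq_add_sq_add_mul_sq_eq h5 ⟨2, by norm_num⟩ hn h
  · rw [hcard, Nat.cast_mul, Nat.cast_pow, show 2 * k = 2 * k - 1 + 1 by omega, Nat.add_sub_cancel,
      pow_succ]
    field_simp
    ring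
end
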